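/- The weighted total variation metric controls differences of means and covariances: Let μ1, μ2 be probability measures on R^n with finite second moments. Then | M(μ1) − M(μ2) | ≤ (1/2) d_g(μ1, μ2), and, with ‖·‖ the operator norm on matrices, ‖ C(μ1) − C(μ2) ‖ ≤ ( 1 + (1/2) | M(μ1) + M(μ2) | ) d_g(μ1, μ2). -/

import Mathlib

open MeasureTheory Matrix
open scoped ENNReal NNReal BigOperators

noncomputable section

/-- Euclidean state space `ℝ^d`. -/
abbrev E (d : ℕ) : Type := EuclideanSpace ℝ (Fin d)

/-- Coerce a plain vector to a point of Euclidean space. -/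
def toE {d : ℕ} (v : Fin d → ℝ) : E d := WithLp.toLp 2 v

/-- Density of the Gaussian distribution `N(m, S)` on `ℝ^d`. -/
def gDensity {d : ℕ} (m : E d) (S : Matrix (Fin d) (Fin d) ℝ) (x : E d) : ℝ :=
  (Real.sqrt ((2 * Real.pi) ^ d * S.det))⁻¹ *
    Real.exp (-(1 / 2) * dotProduct (fun i => x i - m i) (S⁻¹.mulVec fun i => x i - m i))

/-- The Gaussian measure `N(m,S)` on `ℝ^d`. -/
def gMeasure {d : ℕ} (m : E d) (S : Matrix (Fin d) (Fin d) ℝ) : Measure (E d) :=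
  volume.withDensity fun x => ENNReal.ofReal (gDensity m S x)

/-- `μ` is a (nondegenerate) Gaussian measure. -/
def IsGaussianMeasure {d : ℕ} (μ : Measure (E d)) : Prop :=
  ∃ m S, Matrix.PosDef S ∧ μ = gMeasure m S

/-- `q`-th polynomial moment `∫ |x|^q dμ`. -/
def Mq {d : ℕ} (q : ℝ) (μ : Measure (E d)) : ℝ := ∫ x, ‖x‖ ^ q ∂μ

/-- Finiteness of the `q`-th polynomial moment. -/
def HasMoment {d : ℕ} (q : ℝ) (μ : Measure (E d)) : Prop :=
  Integrable (fun x => ‖x‖ ^ q) μ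

/-- Mean vector of `μ`. -/
def meanV {d : ℕ} (μ : Measure (E d)) : E d := toE fun i => ∫ x, x i ∂μ

/-- Covariance matrix of `μ`. -/
def covM {d : ℕ} (μ : Measure (E d)) : Matrix (Fin d) (Fin d) ℝ :=
  Matrix.of fun i j => ∫ x, (x i - meanV μ i) * (x j - meanV μ j) ∂μ

/-- Weighted total variation distance with weight function `g`. -/
def dgW {α : Type*} [MeasurableSpace α] (g : α → ℝ) (μ ν : Measure α) : ℝ :=
  ⨆ f : { f : α → ℝ // Measurable f ∧ ∀ v, |f v| ≤ g v },
    |(∫ v, f.1 v ∂μ) - ∫ v, f.1 v ∂ν|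

/-- Weighted TV metric on `ℝ^d` with weight `g v = 1 + |v|²`. -/
def dg {d : ℕ} (μ ν : Measure (E d)) : ℝ := dgW (fun v => 1 + ‖v‖ ^ 2) μ ν

/-- Weighted TV metric on the product space with weight `g (u,y) = 1 + |u|² + |y|²`. -/
def dgP {du dy : ℕ} (μ ν : Measure (E du × E dy)) : ℝ :=
  dgW (fun v => 1 + ‖v.1‖ ^ 2 + ‖v.2‖ ^ 2) μ ν

/-- Loewner order on symmetric matrices: `A ≼ B`. -/
def matLE {n : Type*} [Fintype n] (A B : Matrix n n ℝ) : Prop := (B - A).PosSemidef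

/-- Prediction operator: law of `Ψ(V) + ξ`, `V ∼ μ`, `ξ ∼ N(0,Σ)` independent. -/
def Pop {du : ℕ} (Ψ : E du → E du) (Sm : Matrix (Fin du) (Fin du) ℝ)
    (μ : Measure (E du)) : Measure (E du) :=
  (μ.prod (gMeasure 0 Sm)).map fun p => Ψ p.1 + p.2

/-- Observation-lifting operator: law of `(U, h(U) + η)`, `U ∼ μ`, `η ∼ N(0,Γ)` independent. -/
def Qop {du dy : ℕ} (h : E du → E dy) (Gm : Matrix (Fin dy) (Fin dy) ℝ)
    (μ : Measure (E du)) : Measure (E du × E dy) :=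
  (μ.prod (gMeasure 0 Gm)).map fun p => (p.1, h p.1 + p.2)

/-- Conditioning (Bayes) operator `B(π; y†)`, defined through the Lebesgue density of `π`. -/
def Bop {du dy : ℕ} (π : Measure (E du × E dy)) (yd : E dy) : Measure (E du) :=
  volume.withDensity fun u =>
    π.rnDeriv volume (u, yd) / ∫⁻ U, π.rnDeriv volume (U, yd)

/-- Mean of the `u`-marginal. -/
def meanU {du dy : ℕ} (π : Measure (E du × E dy)) : E du := toE fun i => ∫ p, p.1 i ∂π

/-- Mean of the `y`-marginal. -/
def meanY {du dy : ℕ} (π : Measure (E du × E dy)) : E dy := toE fun j => ∫ p, p.2 j ∂π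

/-- Covariance block `C^{uu}(π)`. -/
def covUU {du dy : ℕ} (π : Measure (E du × E dy)) : Matrix (Fin du) (Fin du) ℝ :=
  Matrix.of fun i j => ∫ p, (p.1 i - meanU π i) * (p.1 j - meanU π j) ∂π

/-- Cross-covariance block `C^{uy}(π)`. -/
def covUY {du dy : ℕ} (π : Measure (E du × E dy)) : Matrix (Fin du) (Fin dy) ℝ :=
  Matrix.of fun i j => ∫ p, (p.1 i - meanU π i) * (p.2 j - meanY π j) ∂π

/-- Covariance block `C^{yy}(π)`. -/
def covYY {du dy : ℕ} (π : Measure (E du × E dy)) : Matrix (Fin dy) (Fin dy) ℝ :=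
  Matrix.of fun i j => ∫ p, (p.2 i - meanY π i) * (p.2 j - meanY π j) ∂π

/-- Kalman transport operator `T(π; y†)`. -/
def Tkal {du dy : ℕ} (π : Measure (E du × E dy)) (yd : E dy) : Measure (E du) :=
  π.map fun p => p.1 + toE ((covUY π * (covYY π)⁻¹).mulVec fun j => yd j - p.2 j)

/-- Gaussian projection operator on `ℝ^d`. -/
def Gproj {d : ℕ} (μ : Measure (E d)) : Measure (E d) := gMeasure (meanV μ) (covM μ)

/-- Gaussian density on the product space `ℝ^{d_u} × ℝ^{d_y}`. -/
def gDensityP {du dy : ℕ} (m : E du × E dy)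
    (S : Matrix (Fin du ⊕ Fin dy) (Fin du ⊕ Fin dy) ℝ) (x : E du × E dy) : ℝ :=
  (Real.sqrt ((2 * Real.pi) ^ (du + dy) * S.det))⁻¹ *
    Real.exp (-(1 / 2) * dotProduct
      (Sum.elim (fun i => x.1 i - m.1 i) fun j => x.2 j - m.2 j)
      (S⁻¹.mulVec (Sum.elim (fun i => x.1 i - m.1 i) fun j => x.2 j - m.2 j)))

/-- Gaussian measure on the product space. -/
def gMeasureP {du dy : ℕ} (m : E du × E dy)
    (S : Matrix (Fin du ⊕ Fin dy) (Fin du ⊕ Fin dy) ℝ) : Measure (E du × E dy) :=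
  volume.withDensity fun x => ENNReal.ofReal (gDensityP m S x)

/-- Full covariance matrix of a measure on the product space, in block form. -/
def jointCov {du dy : ℕ} (π : Measure (E du × E dy)) :
    Matrix (Fin du ⊕ Fin dy) (Fin du ⊕ Fin dy) ℝ :=
  Matrix.fromBlocks (covUU π) (covUY π) (covUY π)ᵀ (covYY π)

/-- Gaussian projection operator on the product space. -/
def GprojP {du dy : ℕ} (π : Measure (E du × E dy)) : Measure (E du × E dy) :=
  gMeasureP (meanU π, meanY π) (jointCov π)

/-!
Testing `dg` against `v ↦ ⟪x, v⟫` and `v ↦ ⟪x, v⟫ * ⟪y, v⟫`, which are dominated by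
`‖x‖ / 2 * (1 + ‖v‖²)` and `‖x‖ * ‖y‖ * (1 + ‖v‖²)`, bounds the differences of the first and
second moments in every direction. The covariance is the second moment minus the product of
the means, and by polarisation the difference of those products,
`⟪x, a⟫⟪y, a⟫ - ⟪x, b⟫⟪y, b⟫`, only involves `a - b`, already bounded, and `a + b`.
-/

open scoped RealInnerProductSpace
open ProbabilityTheory

section dgW

variable {α : Type*} [MeasurableSpace α] {g : α → ℝ} {μ ν : Measure α}

lemma dgW_nonneg : 0 ≤ dgW g μ ν := Real.iSup_nonneg fun _ => abs_nonneg _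

lemma abs_integral_sub_integral_le_dgW (hgμ : Integrable g μ) (hgν : Integrable g ν)
    {f : α → ℝ} (hf : Measurable f) (hfg : ∀ v, |f v| ≤ g v) :
    |∫ v, f v ∂μ - ∫ v, f v ∂ν| ≤ dgW g μ ν := by
  have habs_integral_le (ρ : Measure α) (hgρ : Integrable g ρ) {f : α → ℝ}
      (hfg : ∀ v, |f v| ≤ g v) : |∫ v, f v ∂ρ| ≤ ∫ v, g v ∂ρ :=
    norm_integral_le_of_norm_le (f := f) hgρ (ae_of_all _ hfg)
  refine le_ciSup (f := fun f : { f : α → ℝ // Measurable f ∧ ∀ v, |f v| ≤ g v } =>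
    |∫ v, f.1 v ∂μ - ∫ v, f.1 v ∂ν|) ⟨∫ v, g v ∂μ + ∫ v, g v ∂ν, ?_⟩ ⟨f, hf, hfg⟩
  rintro _ ⟨⟨f', -, hf'g⟩, rfl⟩
  exact (abs_sub _ _).trans (add_le_add (habs_integral_le μ hgμ hf'g) (habs_integral_le ν hgν hf'g))

lemma abs_integral_sub_integral_le_mul_dgW (hgμ : Integrable g μ) (hgν : Integrable g ν)
    {f : α → ℝ} (hf : Measurable f) {K : ℝ} (hK : 0 ≤ K) (hfg : ∀ v, |f v| ≤ K * g v) :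
    |∫ v, f v ∂μ - ∫ v, f v ∂ν| ≤ K * dgW g μ ν := by
  rcases hK.eq_or_lt with rfl | hK
  · have hf0 : f = 0 := funext fun v => abs_nonpos_iff.1 (by simpa using hfg v)
    simp [hf0]
  have h := abs_integral_sub_integral_le_dgW hgμ hgν (hf.const_mul K⁻¹) fun v => by
    rw [abs_mul, abs_of_pos (inv_pos.2 hK), inv_mul_le_iff₀ hK]
    exact hfg v
  rwa [integral_const_mul, integral_const_mul, ← mul_sub, abs_mul, abs_of_pos (inv_pos.2 hK),
    inv_mul_le_iff₀ hK] at h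

end dgW

lemma abs_inner_mul_inner_sub_inner_mul_inner_le {F : Type*} [NormedAddCommGroup F]
    [InnerProductSpace ℝ F] (x y a b : F) :
    |⟪x, a⟫ * ⟪y, a⟫ - ⟪x, b⟫ * ⟪y, b⟫| ≤ ‖x‖ * ‖y‖ * (‖a - b‖ * ‖a + b‖) := by
  have hpolar : ⟪x, a⟫ * ⟪y, a⟫ - ⟪x, b⟫ * ⟪y, b⟫
      = (⟪x, a - b⟫ * ⟪y, a + b⟫ + ⟪x, a + b⟫ * ⟪y, a - b⟫) / 2 := by
    simp only [inner_sub_right, inner_add_right]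
    ring
  have hprod (u w : F) : |⟪x, u⟫ * ⟪y, w⟫| ≤ ‖x‖ * ‖u‖ * (‖y‖ * ‖w‖) := by
    rw [abs_mul]
    exact mul_le_mul (abs_real_inner_le_norm x u) (abs_real_inner_le_norm y w)
      (abs_nonneg _) (by positivity)
  rw [hpolar, abs_div, abs_two, div_le_iff₀ two_pos]
  linarith [abs_add_le (⟪x, a - b⟫ * ⟪y, a + b⟫) (⟪x, a + b⟫ * ⟪y, a - b⟫),
    hprod (a - b) (a + b), hprod (a + b) (a - b)]

lemma MeasureTheory.MemLp.integrable_one_add_norm_sq {F : Type*} [NormedAddCommGroup F]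
    [MeasurableSpace F] {μ : Measure F} [IsFiniteMeasure μ] (h : MemLp id 2 μ) :
    Integrable (fun v => 1 + ‖v‖ ^ 2) μ :=
  (integrable_const 1).add ((memLp_two_iff_integrable_sq_norm h.1).1 h)

section InnerProductSpace

variable {F : Type*} [NormedAddCommGroup F] [InnerProductSpace ℝ F] [CompleteSpace F]
  [MeasurableSpace F] [BorelSpace F] {μ ν : Measure F}

lemma abs_inner_integral_id_sub_le_dgW [IsFiniteMeasure μ] [IsFiniteMeasure ν]
    (hμ : MemLp id 2 μ) (hν : MemLp id 2 ν) (x : F) :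
    |⟪x, μ[id] - ν[id]⟫| ≤ ‖x‖ / 2 * dgW (fun v => 1 + ‖v‖ ^ 2) μ ν := by
  have hbound (v : F) : |⟪x, v⟫| ≤ ‖x‖ / 2 * (1 + ‖v‖ ^ 2) := by
    nlinarith [abs_real_inner_le_norm x v, norm_nonneg x, sq_nonneg (‖v‖ - 1)]
  have h := abs_integral_sub_integral_le_mul_dgW hμ.integrable_one_add_norm_sq
    hν.integrable_one_add_norm_sq (continuous_const.inner continuous_id).measurable
    (by positivity) hbound
  rwa [integral_inner (hμ.integrable one_le_two), integral_inner (hν.integrable one_le_two),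
    ← inner_sub_right] at h

lemma norm_integral_id_sub_le_half_dgW [IsFiniteMeasure μ] [IsFiniteMeasure ν]
    (hμ : MemLp id 2 μ) (hν : MemLp id 2 ν) :
    ‖μ[id] - ν[id]‖ ≤ 1 / 2 * dgW (fun v => 1 + ‖v‖ ^ 2) μ ν := by
  have h := abs_inner_integral_id_sub_le_dgW hμ hν (μ[id] - ν[id])
  rw [real_inner_self_eq_norm_sq, abs_of_nonneg (sq_nonneg _)] at h
  have hD : 0 ≤ dgW (fun v : F => 1 + ‖v‖ ^ 2) μ ν := dgW_nonneg
  nlinarith [norm_nonneg (μ[id] - ν[id])]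

lemma covarianceBilin_eq_integral_sub [IsProbabilityMeasure μ] (h : MemLp id 2 μ) (x y : F) :
    covarianceBilin μ x y = ∫ v, ⟪x, v⟫ * ⟪y, v⟫ ∂μ - ⟪x, μ[id]⟫ * ⟪y, μ[id]⟫ := by
  have hx : MemLp (fun v => ⟪x, v⟫) 2 μ := h.const_inner x
  have hy : MemLp (fun v => ⟪y, v⟫) 2 μ := h.const_inner y
  rw [covarianceBilin_apply_eq_cov h, covariance_eq_sub hx hy,
    ← integral_inner (h.integrable one_le_two), ← integral_inner (h.integrable one_le_two)]
  rfl

lemma abs_covarianceBilin_sub_le_dgW [IsProbabilityMeasure μ] [IsProbabilityMeasure ν]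
    (hμ : MemLp id 2 μ) (hν : MemLp id 2 ν) (x y : F) :
    |covarianceBilin μ x y - covarianceBilin ν x y| ≤
      (1 + 1 / 2 * ‖μ[id] + ν[id]‖) * dgW (fun v => 1 + ‖v‖ ^ 2) μ ν * (‖x‖ * ‖y‖) := by
  set D := dgW (fun v : F => 1 + ‖v‖ ^ 2) μ ν
  have hbound (v : F) : |⟪x, v⟫ * ⟪y, v⟫| ≤ ‖x‖ * ‖y‖ * (1 + ‖v‖ ^ 2) := by
    rw [abs_mul]
    have := mul_le_mul (abs_real_inner_le_norm x v) (abs_real_inner_le_norm y v)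
      (abs_nonneg _) (by positivity)
    nlinarith [mul_nonneg (norm_nonneg x) (norm_nonneg y)]
  have hsecond := abs_integral_sub_integral_le_mul_dgW hμ.integrable_one_add_norm_sq
    hν.integrable_one_add_norm_sq
    ((continuous_const.inner continuous_id).mul (continuous_const.inner continuous_id)).measurable
    (by positivity) hbound
  have hmean := abs_inner_mul_inner_sub_inner_mul_inner_le x y μ[id] ν[id]
  have hdiff := norm_integral_id_sub_le_half_dgW hμ hν
  rw [covarianceBilin_eq_integral_sub hμ, covarianceBilin_eq_integral_sub hν, sub_sub_sub_comm]
  calc _ ≤ ‖x‖ * ‖y‖ * D + ‖x‖ * ‖y‖ * (‖μ[id] - ν[id]‖ * ‖μ[id] + ν[id]‖) :=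
        (abs_sub _ _).trans (add_le_add hsecond hmean)
    _ ≤ ‖x‖ * ‖y‖ * D + ‖x‖ * ‖y‖ * (1 / 2 * D * ‖μ[id] + ν[id]‖) := by gcongr
    _ = _ := by ring

end InnerProductSpace

section Euclidean

variable {d : ℕ} {μ : Measure (E d)}

lemma HasMoment.memLp_two (h : HasMoment 2 μ) : MemLp id 2 μ := by
  refine (memLp_two_iff_integrable_sq_norm aestronglyMeasurable_id).2 ?_
  simpa only [HasMoment, Real.rpow_two, id] using h

lemma meanV_eq_integral_id (h : Integrable id μ) : meanV μ = μ[id] := by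
  ext i
  exact (eval_integral_piLp h.eval_piLp i).symm

lemma inner_toEuclideanCLM_covM [IsFiniteMeasure μ] (h : MemLp id 2 μ) (x y : E d) :
    ⟪x, Matrix.toEuclideanCLM (𝕜 := ℝ) (covM μ) y⟫ = covarianceBilin μ x y := by
  have hpi := covarianceBilin_apply_pi h.eval_piLp x y
  rw [Measure.map_id] at hpi
  simp only [id] at hpi
  rw [hpi, Matrix.inner_toEuclideanCLM]
  have hcov (i j : Fin d) : covM μ i j = cov[fun v => v i, fun v => v j; μ] := rfl
  simp only [dotProduct, mulVec, Finset.mul_sum, hcov]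
  exact Finset.sum_congr rfl fun i _ => Finset.sum_congr rfl fun j _ => by ring

end Euclidean

/-- **The weighted TV metric controls differences of means and covariances** (Lemma B.5).
For probability measures `μ1, μ2` on `ℝ^n` with finite second moments,
`|M(μ1) − M(μ2)| ≤ (1/2) d_g(μ1, μ2)` and
`‖C(μ1) − C(μ2)‖ ≤ (1 + (1/2)|M(μ1) + M(μ2)|) d_g(μ1, μ2)` in the operator norm. -/
theorem dg_controls_mean_and_covariance
    {n : ℕ} (μ1 μ2 : Measure (E n))
    (hμ1P : IsProbabilityMeasure μ1) (hμ2P : IsProbabilityMeasure μ2)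
    (hmom1 : HasMoment 2 μ1) (hmom2 : HasMoment 2 μ2) :
    ‖meanV μ1 - meanV μ2‖ ≤ (1 / 2) * dg μ1 μ2 ∧
    ‖Matrix.toEuclideanCLM (𝕜 := ℝ) (covM μ1 - covM μ2)‖ ≤
      (1 + (1 / 2) * ‖meanV μ1 + meanV μ2‖) * dg μ1 μ2 := by
  have h1 := hmom1.memLp_two
  have h2 := hmom2.memLp_two
  rw [meanV_eq_integral_id (h1.integrable one_le_two),
    meanV_eq_integral_id (h2.integrable one_le_two)]
  refine ⟨norm_integral_id_sub_le_half_dgW h1 h2, ?_⟩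
  have hdg : 0 ≤ dg μ1 μ2 := dgW_nonneg
  refine ContinuousLinearMap.opNorm_le_of_re_inner_le (by positivity) fun x y hx hy => ?_
  have hcov := abs_covarianceBilin_sub_le_dgW h1 h2 y x
  rw [hx, hy, mul_one, mul_one] at hcov
  rw [RCLike.re_to_real, real_inner_comm, map_sub, _root_.sub_apply, inner_sub_right,
    inner_toEuclideanCLM_covM h1, inner_toEuclideanCLM_covM h2]
  exact (le_abs_self _).trans hcov

end
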